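/- Let 𝓛 be the lamplighter group, F̃_n = {(t, K) ∈ 𝓛 : t ∈ [0,n]∩ℤ and K ⊆ [0,n]∩ℤ}, and F_n = (F̃_n)⁻¹ · F̃_n. Define l : ℕ → ℕ by l(1) = 1 and l(n) = 17^{2^n · l(n−1)} for n ≥ 2, and define E₁ = F_{l(1)} and E_n = (E_{n−1})^{2^n−2} · F_{l(n)} · (E_{n−1})^{2^n−2} for n ≥ 2, where A^k denotes the k-fold product set. Then |E_n \ F_{l(n)}| / |F_{l(n)}| → 0 as n → ∞; equivalently, |F_{l(n)}| / |E_n| → 1. -/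

import Mathlib

open scoped symmDiff

/-- The lamplighter group `ℤ ≀ ℤ₂`, realized as pairs `(t, K)` with `t ∈ ℤ` the
position of the lamplighter and `K` a finite set of integers (the lamps turned on). -/
structure Lamp where
  pos : ℤ
  lamps : Finset ℤ
deriving DecidableEq

namespace Lamp

/-- The shift `t + K` of a finite set of integers. -/
def shift (t : ℤ) (K : Finset ℤ) : Finset ℤ := K.image (t + ·)

lemma mem_shift {t x : ℤ} {K : Finset ℤ} : x ∈ shift t K ↔ x - t ∈ K := by
  constructor
  · rintro h
    simp only [shift, Finset.mem_image] at h
    obtain ⟨k, hk, rfl⟩ := h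
    simpa using hk
  · intro h
    simp only [shift, Finset.mem_image]
    exact ⟨x - t, h, by ring⟩

lemma shift_symmDiff (t : ℤ) (A B : Finset ℤ) :
    shift t (A ∆ B) = shift t A ∆ shift t B := by
  ext x
  simp [mem_shift, Finset.mem_symmDiff]

lemma shift_shift (s t : ℤ) (K : Finset ℤ) : shift s (shift t K) = shift (s + t) K := by
  ext x
  simp [mem_shift, sub_sub]

lemma shift_zero (K : Finset ℤ) : shift 0 K = K := by
  ext x; simp [mem_shift]

lemma shift_empty (t : ℤ) : shift t (∅ : Finset ℤ) = ∅ := by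
  simp [shift]

lemma empty_symmDiff (A : Finset ℤ) : (∅ : Finset ℤ) ∆ A = A := by
  ext x; simp [Finset.mem_symmDiff]

lemma symmDiff_empty (A : Finset ℤ) : A ∆ (∅ : Finset ℤ) = A := by
  ext x; simp [Finset.mem_symmDiff]

lemma symmDiff_self' (A : Finset ℤ) : A ∆ A = (∅ : Finset ℤ) := by
  ext x; simp [Finset.mem_symmDiff]

instance : Mul Lamp := ⟨fun a b => ⟨a.pos + b.pos, a.lamps ∆ shift a.pos b.lamps⟩⟩
instance : One Lamp := ⟨⟨0, ∅⟩⟩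
instance : Inv Lamp := ⟨fun a => ⟨-a.pos, shift (-a.pos) a.lamps⟩⟩

@[simp] lemma mul_pos' (a b : Lamp) : (a * b).pos = a.pos + b.pos := rfl
@[simp] lemma mul_lamps (a b : Lamp) : (a * b).lamps = a.lamps ∆ shift a.pos b.lamps := rfl
@[simp] lemma one_pos' : (1 : Lamp).pos = 0 := rfl
@[simp] lemma one_lamps : (1 : Lamp).lamps = ∅ := rfl
@[simp] lemma inv_pos' (a : Lamp) : a⁻¹.pos = -a.pos := rfl
@[simp] lemma inv_lamps (a : Lamp) : a⁻¹.lamps = shift (-a.pos) a.lamps := rfl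

@[ext] lemma ext' {a b : Lamp} (h1 : a.pos = b.pos) (h2 : a.lamps = b.lamps) : a = b := by
  cases a; cases b; simp_all

instance : Group Lamp where
  mul_assoc a b c := by
    refine ext' ?_ ?_
    · simp [add_assoc]
    · simp [shift_symmDiff, shift_shift, symmDiff_assoc]
  one_mul a := by
    refine ext' ?_ ?_
    · simp
    · rw [mul_lamps, one_lamps, one_pos', shift_zero, empty_symmDiff]
  mul_one a := by
    refine ext' ?_ ?_
    · simp
    · rw [mul_lamps, one_lamps, shift_empty, symmDiff_empty]
  inv_mul_cancel a := by
    refine ext' ?_ ?_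
    · simp
    · rw [mul_lamps, inv_lamps, inv_pos', symmDiff_self', one_lamps]

/-- The standard right Følner sets `F̃ n` of the lamplighter group. -/
def Ftilde (n : ℕ) : Set Lamp :=
  {x | x.pos ∈ Set.Icc (0 : ℤ) n ∧ ∀ k ∈ x.lamps, k ∈ Set.Icc (0 : ℤ) n}

end Lamp

open Pointwise Filter Topology

/-- The two-sided Følner sets `F n = (F̃ n)⁻¹ · F̃ n` of the lamplighter group. -/
def Lamp.F (n : ℕ) : Set Lamp := (Lamp.Ftilde n)⁻¹ * Lamp.Ftilde n

/-!
Elements of `F N` are exactly the `(t, K)` for which the sites `{0, t} ∪ K` fit in a window of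
length `N`; hence `(N + 1)² 2^N ≤ |F N| ≤ (2N + 1)(N + 1) 2^(N + 1)`, and by induction
`E n ⊆ F (2 l n)`. If `y ∈ F N` has a window leaving room `2r` around `0` and around its position,
then `F r · y · F r ⊆ F N`; the remaining `y` number `O(r N 2^N)`, a fraction `O(r / N)` of `F N`.
With `A = E (n-1) ^ (2^n - 2) ⊆ F r`, `r ≤ 2t`, `t = 2^n l (n-1)` and `N = l n = 17^t`, this gives
`|E n \ F N| / |F N| = O(|F r|² r / N) = O(t⁵ (16/17)^t) → 0`.
-/

lemma Set.ncard_mul_le {M : Type*} [Mul M] [IsCancelMul M] (s t : Set M) :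
    (s * t).ncard ≤ s.ncard * t.ncard := by
  simpa only [Nat.card_coe_set_eq] using Set.natCard_mul_le

lemma tendsto_ncard_div_ncard_of_tendsto_ncard_diff_div {α ι : Type*} {f : Filter ι}
    {s t : ι → Set α} (hst : ∀ᶠ i in f, s i ⊆ t i ∧ (t i).Finite ∧ (s i).Nonempty)
    (h : Tendsto (fun i => ((t i \ s i).ncard : ℝ) / (s i).ncard) f (𝓝 0)) :
    Tendsto (fun i => ((s i).ncard : ℝ) / (t i).ncard) f (𝓝 1) := by
  have hinv : Tendsto (fun i => (1 + ((t i \ s i).ncard : ℝ) / (s i).ncard)⁻¹) f (𝓝 1) := by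
    simpa using (h.const_add 1).inv₀ (by norm_num)
  refine hinv.congr' (hst.mono fun i ⟨hsub, hfin, hne⟩ => ?_)
  have hs : (0 : ℝ) < (s i).ncard := by exact_mod_cast hne.ncard_pos (hfin.subset hsub)
  simp only [← Set.ncard_sdiff_add_ncard_of_subset hsub hfin, Nat.cast_add]
  field_simp
  ring

lemma four_mul_le_seventeen_pow (t : ℕ) : 4 * t ≤ 17 ^ t := by
  have := one_add_mul_le_pow_of_sq_nonneg (a := (16 : ℕ)) (by positivity) (by positivity)
    (by positivity) t
  rw [Nat.cast_id, show 1 + 16 = 17 by rfl] at this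
  omega

namespace Lamp

def sites (x : Lamp) : Finset ℤ := insert 0 (insert x.pos x.lamps)

lemma zero_mem_sites (x : Lamp) : 0 ∈ x.sites := Finset.mem_insert_self _ _

lemma pos_mem_sites (x : Lamp) : x.pos ∈ x.sites :=
  Finset.mem_insert_of_mem (Finset.mem_insert_self _ _)

lemma lamps_subset_sites (x : Lamp) : x.lamps ⊆ x.sites :=
  (Finset.subset_insert _ _).trans (Finset.subset_insert _ _)

lemma sites_subset_Icc {x : Lamp} {a b : ℤ} :
    x.sites ⊆ Finset.Icc a b ↔
      (a ≤ 0 ∧ 0 ≤ b) ∧ (a ≤ x.pos ∧ x.pos ≤ b) ∧ ∀ k ∈ x.lamps, a ≤ k ∧ k ≤ b := by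
  simp [sites, Finset.subset_iff]

lemma mem_sites_mul {x y : Lamp} {k : ℤ} (hk : k ∈ (x * y).sites) :
    k ∈ x.sites ∨ k - x.pos ∈ y.sites := by
  have hlamps : (x * y).lamps ⊆ x.lamps ∪ shift x.pos y.lamps := symmDiff_le_sup
  simp only [sites, Finset.mem_insert, mul_pos'] at hk ⊢
  rcases hk with rfl | rfl | hk
  · simp
  · simp
  · rcases Finset.mem_union.1 (hlamps hk) with h | h
    · simp [h]
    · simp [mem_shift.1 h]

lemma sites_inv (x : Lamp) : x⁻¹.sites = shift (-x.pos) x.sites := by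
  ext k
  simp only [sites, Finset.mem_insert, inv_pos', inv_lamps, mem_shift]
  grind

lemma mem_Ftilde_iff {N : ℕ} {x : Lamp} : x ∈ Ftilde N ↔ x.sites ⊆ Finset.Icc 0 (N : ℤ) := by
  simp [Ftilde, sites_subset_Icc]

lemma mem_F_iff {N : ℕ} {x : Lamp} : x ∈ F N ↔ ∃ m : ℤ, x.sites ⊆ Finset.Icc m (m + N) := by
  constructor
  · rintro ⟨a, ha, b, hb, rfl⟩
    rw [Set.mem_inv, mem_Ftilde_iff, sites_inv] at ha
    rw [mem_Ftilde_iff] at hb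
    refine ⟨a.pos, fun k hk => ?_⟩
    rcases mem_sites_mul hk with hk | hk
    · have := Finset.mem_Icc.1 (ha (mem_shift.2 (by simpa using hk) : k - a.pos ∈ _))
      rw [Finset.mem_Icc]; omega
    · have := Finset.mem_Icc.1 (hb hk)
      rw [Finset.mem_Icc]; omega
  · rintro ⟨m, hm⟩
    have hm0 := Finset.mem_Icc.1 (hm (zero_mem_sites x))
    refine ⟨⟨m, ∅⟩, ?_, ⟨m, ∅⟩⁻¹ * x, ?_, mul_inv_cancel_left _ _⟩
    · rw [Set.mem_inv, mem_Ftilde_iff, sites_subset_Icc]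
      simp only [inv_pos', inv_lamps, shift_empty, Finset.notMem_empty, IsEmpty.forall_iff,
        implies_true, and_true]
      omega
    · rw [mem_Ftilde_iff]
      intro k hk
      rcases mem_sites_mul hk with hk | hk
      · simp only [sites, inv_pos', inv_lamps, shift_empty, Finset.mem_insert,
          Finset.notMem_empty, or_false] at hk
        rw [Finset.mem_Icc]; omega
      · have := Finset.mem_Icc.1 (hm hk)
        simp only [inv_pos'] at this
        rw [Finset.mem_Icc]; omega

lemma one_mem_F (N : ℕ) : (1 : Lamp) ∈ F N :=
  mem_F_iff.2 ⟨0, by simp [sites_subset_Icc]⟩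

lemma F_mono {a b : ℕ} (hab : a ≤ b) : F a ⊆ F b := by
  intro x hx
  obtain ⟨m, hm⟩ := mem_F_iff.1 hx
  exact mem_F_iff.2 ⟨m, hm.trans (Finset.Icc_subset_Icc le_rfl (by omega))⟩

lemma F_mul_F_subset (a b : ℕ) : F a * F b ⊆ F (a + b) := by
  rintro _ ⟨x, hx, y, hy, rfl⟩
  obtain ⟨m, hm⟩ := mem_F_iff.1 hx
  obtain ⟨m', hm'⟩ := mem_F_iff.1 hy
  have hx0 := Finset.mem_Icc.1 (hm (pos_mem_sites x))
  have hy0 := Finset.mem_Icc.1 (hm' (zero_mem_sites y))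
  refine mem_F_iff.2 ⟨min m (x.pos + m'), fun k hk => ?_⟩
  rw [Finset.mem_Icc]
  push_cast
  rcases mem_sites_mul hk with hk | hk
  · have := Finset.mem_Icc.1 (hm hk); omega
  · have := Finset.mem_Icc.1 (hm' hk); omega

lemma F_pow_subset (a k : ℕ) : F a ^ k ⊆ F (k * a) := by
  induction k with
  | zero => simpa using one_mem_F 0
  | succ k ih =>
    rw [pow_succ, Nat.succ_mul]
    exact (Set.mul_subset_mul_right ih).trans (F_mul_F_subset _ _)

lemma finite_and_ncard_le_of_lamps_subset {S : Set Lamp} {P : Finset (ℤ × ℤ)} (c : Lamp → ℤ)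
    (N : ℕ) (h : ∀ x ∈ S, (x.pos, c x) ∈ P ∧ x.lamps ⊆ Finset.Icc (c x) (c x + N)) :
    S.Finite ∧ S.ncard ≤ P.card * 2 ^ (N + 1) := by
  set code : Lamp → (ℤ × ℤ) × Finset ℤ := fun x => ((x.pos, c x), x.lamps.image (· - c x))
  have hinj : Function.Injective code := by
    intro x y hxy
    simp only [code, Prod.mk.injEq] at hxy
    obtain ⟨⟨hpos, hc⟩, hlamps⟩ := hxy
    rw [hc] at hlamps
    exact ext' hpos (Finset.image_injective (sub_left_injective (b := c y)) hlamps)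
  have hmaps : Set.MapsTo code S ↑(P ×ˢ (Finset.Icc (0 : ℤ) N).powerset) := by
    intro x hx
    obtain ⟨hP, hlamps⟩ := h x hx
    simp only [code, Finset.coe_product, Set.mem_prod, Finset.mem_coe, Finset.mem_powerset]
    refine ⟨hP, fun k hk => ?_⟩
    obtain ⟨j, hj, rfl⟩ := Finset.mem_image.1 hk
    have := Finset.mem_Icc.1 (hlamps hj)
    rw [Finset.mem_Icc]; omega
  refine ⟨Set.Finite.of_injOn hmaps hinj.injOn (Finset.finite_toSet _), ?_⟩
  calc S.ncard ≤ (↑(P ×ˢ (Finset.Icc (0 : ℤ) N).powerset) : Set _).ncard :=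
        Set.ncard_le_ncard_of_injOn code (fun _ hx => hmaps hx) hinj.injOn
    _ = P.card * 2 ^ (N + 1) := by
        rw [Set.ncard_coe_finset, Finset.card_product, Finset.card_powerset, Int.card_Icc]
        congr 2

def minSite (x : Lamp) : ℤ := x.sites.min' ⟨0, zero_mem_sites x⟩

def maxSite (x : Lamp) : ℤ := x.sites.max' ⟨0, zero_mem_sites x⟩

lemma sites_subset_Icc_minSite {N : ℕ} {x : Lamp} (hx : x ∈ F N) :
    x.sites ⊆ Finset.Icc x.minSite (x.minSite + N) := by
  obtain ⟨m, hm⟩ := mem_F_iff.1 hx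
  have hmin : m ≤ x.minSite := (Finset.mem_Icc.1 (hm (Finset.min'_mem _ _))).1
  intro k hk
  have := Finset.mem_Icc.1 (hm hk)
  have : x.minSite ≤ k := Finset.min'_le _ _ hk
  rw [Finset.mem_Icc]; omega

lemma sites_subset_Icc_maxSite {N : ℕ} {x : Lamp} (hx : x ∈ F N) :
    x.sites ⊆ Finset.Icc (x.maxSite - N) x.maxSite := by
  obtain ⟨m, hm⟩ := mem_F_iff.1 hx
  have hmax : x.maxSite ≤ m + N := (Finset.mem_Icc.1 (hm (Finset.max'_mem _ _))).2
  intro k hk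
  have := Finset.mem_Icc.1 (hm hk)
  have : k ≤ x.maxSite := Finset.le_max' _ _ hk
  rw [Finset.mem_Icc]; omega

lemma minSite_window_of_mem_F {N : ℕ} {x : Lamp} (hx : x ∈ F N) :
    (x.pos, x.minSite) ∈ Finset.Icc (-(N : ℤ)) N ×ˢ Finset.Icc (-(N : ℤ)) 0 ∧
      x.lamps ⊆ Finset.Icc x.minSite (x.minSite + N) := by
  have h := sites_subset_Icc_minSite hx
  refine ⟨?_, (lamps_subset_sites x).trans h⟩
  rw [sites_subset_Icc] at h
  simp only [Finset.mem_product, Finset.mem_Icc]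
  omega

lemma finite_F (N : ℕ) : (F N).Finite :=
  (finite_and_ncard_le_of_lamps_subset minSite N fun _ => minSite_window_of_mem_F).1

lemma ncard_F_le (N : ℕ) : (F N).ncard ≤ (2 * N + 1) * (N + 1) * 2 ^ (N + 1) := by
  refine (finite_and_ncard_le_of_lamps_subset minSite N
    fun _ => minSite_window_of_mem_F).2.trans_eq ?_
  rw [Finset.card_product, Int.card_Icc, Int.card_Icc]
  congr 2 <;> omega

lemma le_ncard_F (N : ℕ) : (N + 1) ^ 2 * 2 ^ N ≤ (F N).ncard := by
  set D := Finset.Icc (-(N : ℤ)) 0 ×ˢ Finset.Icc (0 : ℤ) N ×ˢ (Finset.Ioc (0 : ℤ) N).powerset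
  -- the lit lamp at the left end `m` of the window makes `m` recoverable
  set φ : ℤ × ℤ × Finset ℤ → Lamp := fun p => ⟨p.1 + p.2.1, shift p.1 (insert 0 p.2.2)⟩
  have hD : ∀ p ∈ D, (-(N : ℤ) ≤ p.1 ∧ p.1 ≤ 0) ∧ (0 ≤ p.2.1 ∧ p.2.1 ≤ N) ∧
      ∀ k ∈ p.2.2, 0 < k ∧ k ≤ N := by
    intro p hp
    simpa [D, Finset.subset_iff] using hp
  have hmaps : ∀ p ∈ (D : Set (ℤ × ℤ × Finset ℤ)), φ p ∈ F N := by
    intro p hp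
    obtain ⟨hm, hi, hL⟩ := hD p hp
    refine mem_F_iff.2 ⟨p.1, sites_subset_Icc.2 ⟨by omega, by simp only [φ]; omega, ?_⟩⟩
    intro k hk
    rcases Finset.mem_insert.1 (mem_shift.1 hk) with hk | hk
    · omega
    · have := hL _ hk; omega
  have hinj : Set.InjOn φ D := by
    intro p hp q hq hpq
    obtain ⟨-, -, hLp⟩ := hD p hp
    obtain ⟨-, -, hLq⟩ := hD q hq
    simp only [φ, Lamp.mk.injEq] at hpq
    obtain ⟨hpos, hlamps⟩ := hpq
    have hle : ∀ {m m' : ℤ} {L L' : Finset ℤ}, (∀ k ∈ L', 0 < k ∧ k ≤ N) →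
        shift m (insert 0 L) = shift m' (insert 0 L') → m' ≤ m := by
      intro m m' L L' hL' h
      have : m ∈ shift m' (insert 0 L') := h ▸ mem_shift.2 (by simp)
      rcases Finset.mem_insert.1 (mem_shift.1 this) with h0 | h0
      · omega
      · have := hL' _ h0; omega
    have hm : p.1 = q.1 := le_antisymm (hle hLp hlamps.symm) (hle hLq hlamps)
    rw [hm] at hlamps
    have hins := Finset.image_injective (add_right_injective q.1) hlamps
    have h0p : (0 : ℤ) ∉ p.2.2 := fun h => by have := hLp _ h; omega
    have h0q : (0 : ℤ) ∉ q.2.2 := fun h => by have := hLq _ h; omega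
    refine Prod.ext hm (Prod.ext (by omega) ?_)
    rw [← Finset.erase_insert h0p, ← Finset.erase_insert h0q, hins]
  calc (N + 1) ^ 2 * 2 ^ N = (D : Set (ℤ × ℤ × Finset ℤ)).ncard := by
        rw [Set.ncard_coe_finset, Finset.card_product, Finset.card_product, Finset.card_powerset,
          Int.card_Icc, Int.card_Icc, Int.card_Ioc, show (0 + 1 - -(N : ℤ)).toNat = N + 1 by omega,
          show ((N : ℤ) + 1 - 0).toNat = N + 1 by omega, show ((N : ℤ) - 0).toNat = N by omega]
        ring
    _ ≤ (F N).ncard := Set.ncard_le_ncard_of_injOn φ hmaps hinj (finite_F N)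

def Fcore (N r : ℕ) : Set Lamp :=
  {x | ∃ m : ℤ, x.sites ⊆ Finset.Icc m (m + N) ∧
    m + 2 * r ≤ min 0 x.pos ∧ max 0 x.pos + 2 * r ≤ m + N}

lemma F_mul_Fcore_mul_F_subset (N r : ℕ) : F r * Fcore N r * F r ⊆ F N := by
  rintro _ ⟨_, ⟨g, hg, x, ⟨m, hm, hml, hmr⟩, rfl⟩, h, hh, rfl⟩
  obtain ⟨mg, hmg⟩ := mem_F_iff.1 hg
  obtain ⟨mh, hmh⟩ := mem_F_iff.1 hh
  have hg0 := Finset.mem_Icc.1 (hmg (zero_mem_sites g))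
  have hgp := Finset.mem_Icc.1 (hmg (pos_mem_sites g))
  have hh0 := Finset.mem_Icc.1 (hmh (zero_mem_sites h))
  have hx0 := Finset.mem_Icc.1 (hm (zero_mem_sites x))
  have hxp := Finset.mem_Icc.1 (hm (pos_mem_sites x))
  refine mem_F_iff.2 ⟨g.pos + m, fun k hk => Finset.mem_Icc.2 ?_⟩
  rcases mem_sites_mul hk with hk | hk
  · rcases mem_sites_mul hk with hk | hk
    · have := Finset.mem_Icc.1 (hmg hk); omega
    · have := Finset.mem_Icc.1 (hm hk); omega
  · have := Finset.mem_Icc.1 (hmh hk)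
    simp only [mul_pos'] at this
    omega

lemma ncard_F_diff_Fcore_le (N r : ℕ) :
    (F N \ Fcore N r).ncard ≤ 4 * r * (2 * N + 1) * 2 ^ (N + 1) := by
  set B₁ := {x ∈ F N | min 0 x.pos - 2 * r < x.minSite}
  set B₂ := {x ∈ F N | x.maxSite < max 0 x.pos + 2 * r}
  have hsub : F N \ Fcore N r ⊆ B₁ ∪ B₂ := by
    rintro x ⟨hx, hcore⟩
    by_contra hB
    simp only [Set.mem_union, Set.mem_sep_iff, B₁, B₂, hx, true_and, not_or, not_lt] at hB
    have hwin := sites_subset_Icc_minSite hx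
    have hmax : x.maxSite ≤ x.minSite + N := (Finset.mem_Icc.1 (hwin (Finset.max'_mem _ _))).2
    exact hcore ⟨x.minSite, hwin, by omega, by omega⟩
  set I := Finset.Icc (-(N : ℤ)) N ×ˢ Finset.Ico (0 : ℤ) (2 * r)
  have hI : ∀ f : ℤ × ℤ → ℤ × ℤ, (I.image f).card ≤ (2 * N + 1) * (2 * r) := by
    intro f
    refine Finset.card_image_le.trans_eq ?_
    rw [Finset.card_product, Int.card_Icc, Int.card_Ico]
    congr 1
    omega
  have hB₁ : B₁.ncard ≤ (2 * N + 1) * (2 * r) * 2 ^ (N + 1) := by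
    refine (finite_and_ncard_le_of_lamps_subset
      (P := I.image fun p => (p.1, min 0 p.1 - p.2)) minSite N fun x hx => ?_).2.trans
      (Nat.mul_le_mul_right _ (hI _))
    obtain ⟨hx, hx₁⟩ := hx
    obtain ⟨hpos, hlamps⟩ := minSite_window_of_mem_F hx
    have h0 : x.minSite ≤ 0 := Finset.min'_le _ _ (zero_mem_sites x)
    have hp : x.minSite ≤ x.pos := Finset.min'_le _ _ (pos_mem_sites x)
    refine ⟨Finset.mem_image.2 ⟨(x.pos, min 0 x.pos - x.minSite), ?_, by simp⟩, hlamps⟩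
    simp only [I, Finset.mem_product, Finset.mem_Icc, Finset.mem_Ico] at hpos ⊢
    omega
  have hB₂ : B₂.ncard ≤ (2 * N + 1) * (2 * r) * 2 ^ (N + 1) := by
    refine (finite_and_ncard_le_of_lamps_subset
      (P := I.image fun p => (p.1, max 0 p.1 + p.2 - N)) (fun x => x.maxSite - N) N
        fun x hx => ?_).2.trans (Nat.mul_le_mul_right _ (hI _))
    obtain ⟨hx, hx₂⟩ := hx
    have hwin := sites_subset_Icc_maxSite hx
    have h0 : 0 ≤ x.maxSite := Finset.le_max' _ _ (zero_mem_sites x)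
    have hp : x.pos ≤ x.maxSite := Finset.le_max' _ _ (pos_mem_sites x)
    refine ⟨Finset.mem_image.2 ⟨(x.pos, x.maxSite - max 0 x.pos), ?_, by simp⟩,
      (lamps_subset_sites x).trans (by simpa using hwin)⟩
    rw [sites_subset_Icc] at hwin
    simp only [I, Finset.mem_product, Finset.mem_Icc, Finset.mem_Ico]
    omega
  calc (F N \ Fcore N r).ncard ≤ (B₁ ∪ B₂).ncard :=
        Set.ncard_le_ncard hsub (((finite_F N).subset fun _ h => h.1).union
          ((finite_F N).subset fun _ h => h.1))
    _ ≤ B₁.ncard + B₂.ncard := Set.ncard_union_le _ _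
    _ ≤ 4 * r * (2 * N + 1) * 2 ^ (N + 1) := by nlinarith

lemma ncard_F_diff_Fcore_mul_le (N r : ℕ) : (F N \ Fcore N r).ncard * N ≤ 16 * r * (F N).ncard := by
  have h2N : 2 ^ (N + 1) = 2 * 2 ^ N := by ring
  have hN : (2 * N + 1) * N ≤ 2 * (N + 1) ^ 2 := by nlinarith
  calc (F N \ Fcore N r).ncard * N ≤ 4 * r * (2 * N + 1) * 2 ^ (N + 1) * N :=
        Nat.mul_le_mul_right _ (ncard_F_diff_Fcore_le N r)
    _ = 8 * r * ((2 * N + 1) * N) * 2 ^ N := by rw [h2N]; ring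
    _ ≤ 8 * r * (2 * (N + 1) ^ 2) * 2 ^ N := by gcongr
    _ = 16 * r * ((N + 1) ^ 2 * 2 ^ N) := by ring
    _ ≤ 16 * r * (F N).ncard := by gcongr; exact le_ncard_F N

lemma ncard_mul_F_mul_diff_F_mul_le {A : Set Lamp} {N r : ℕ} (hA : A ⊆ F r) :
    ((A * F N * A) \ F N).ncard * N ≤ 16 * r * (F r).ncard ^ 2 * (F N).ncard := by
  set X := F N \ Fcore N r
  have hsub : (A * F N * A) \ F N ⊆ A * X * A := by
    rintro _ ⟨⟨_, ⟨a, ha, y, hy, rfl⟩, b, hb, rfl⟩, hnot⟩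
    refine ⟨_, ⟨a, ha, y, ⟨hy, fun hc => hnot ?_⟩, rfl⟩, b, hb, rfl⟩
    exact F_mul_Fcore_mul_F_subset N r ⟨_, ⟨a, hA ha, y, hc, rfl⟩, b, hA hb, rfl⟩
  have hAfin : A.Finite := (finite_F r).subset hA
  have hA_le : A.ncard ≤ (F r).ncard := Set.ncard_le_ncard hA (finite_F r)
  calc ((A * F N * A) \ F N).ncard * N ≤ (A.ncard * X.ncard * A.ncard) * N := by
        refine Nat.mul_le_mul_right _ ?_
        calc ((A * F N * A) \ F N).ncard ≤ (A * X * A).ncard :=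
              Set.ncard_le_ncard hsub ((hAfin.mul (finite_F N).sdiff).mul hAfin)
          _ ≤ A.ncard * X.ncard * A.ncard :=
              (Set.ncard_mul_le _ _).trans (Nat.mul_le_mul_right _ (Set.ncard_mul_le _ _))
    _ = A.ncard ^ 2 * (X.ncard * N) := by ring
    _ ≤ (F r).ncard ^ 2 * (16 * r * (F N).ncard) :=
        Nat.mul_le_mul (Nat.pow_le_pow_left hA_le 2) (ncard_F_diff_Fcore_mul_le N r)
    _ = 16 * r * (F r).ncard ^ 2 * (F N).ncard := by ring

lemma ncard_mul_F_mul_diff_div_le {A : Set Lamp} {r t : ℕ} (hA : A ⊆ F r) (hrt : r ≤ 2 * t)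
    (ht : 1 ≤ t) :
    (((A * F (17 ^ t) * A) \ F (17 ^ t)).ncard : ℝ) / (F (17 ^ t)).ncard ≤
      28800 * t ^ 5 * (16 / 17 : ℝ) ^ t := by
  have hFpos : (0 : ℝ) < (F (17 ^ t)).ncard := by
    have := le_ncard_F (17 ^ t)
    exact_mod_cast (by positivity : 0 < (17 ^ t + 1) ^ 2 * 2 ^ 17 ^ t).trans_le this
  -- `28800 = 16 · 2 · (5 · 3) ^ 2 · 4`: `r ≤ 2t`, `2r + 1 ≤ 5t`, `r + 1 ≤ 3t`, `4 ^ r ≤ 16 ^ t`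
  have hpoly : 16 * r * ((F r).ncard) ^ 2 ≤ 28800 * t ^ 5 * 16 ^ t := by
    have h4 : 2 ^ (r + 1) * 2 ^ (r + 1) ≤ 4 * 16 ^ t := by
      rw [← pow_add, show (16 : ℕ) = 2 ^ 4 by norm_num, ← pow_mul, show (4 : ℕ) = 2 ^ 2 by rfl,
        ← pow_add]
      exact Nat.pow_le_pow_right (by norm_num) (by omega)
    calc 16 * r * ((F r).ncard) ^ 2 ≤ 16 * r * ((2 * r + 1) * (r + 1) * 2 ^ (r + 1)) ^ 2 := by
          gcongr; exact ncard_F_le r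
      _ = 16 * r * ((2 * r + 1) * (r + 1)) ^ 2 * (2 ^ (r + 1) * 2 ^ (r + 1)) := by ring
      _ ≤ 16 * (2 * t) * (5 * t * (3 * t)) ^ 2 * (4 * 16 ^ t) := by
          gcongr <;> omega
      _ = 28800 * t ^ 5 * 16 ^ t := by ring
  have key : (((A * F (17 ^ t) * A) \ F (17 ^ t)).ncard : ℝ) * 17 ^ t ≤
      28800 * t ^ 5 * 16 ^ t * (F (17 ^ t)).ncard := by
    exact_mod_cast (ncard_mul_F_mul_diff_F_mul_le hA).trans (Nat.mul_le_mul_right _ hpoly)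
  rw [div_le_iff₀ hFpos, div_pow, ← mul_le_mul_iff_of_pos_right (by positivity : (0 : ℝ) < 17 ^ t)]
  exact key.trans_eq (by field_simp)

section Sequence

variable {l : ℕ → ℕ} {E : ℕ → Set Lamp}

lemma one_mem_E (hE1 : E 1 = F (l 1))
    (hE : ∀ n ≥ 2, E n = E (n - 1) ^ (2 ^ n - 2) * F (l n) * E (n - 1) ^ (2 ^ n - 2))
    {n : ℕ} (hn : 1 ≤ n) : 1 ∈ E n := by
  induction n, hn using Nat.le_induction with
  | base => exact hE1 ▸ one_mem_F _
  | succ n hn ih =>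
    rw [hE (n + 1) (by omega), Nat.add_sub_cancel]
    simpa using Set.mul_mem_mul (Set.mul_mem_mul (Set.one_mem_pow ih) (one_mem_F _))
      (Set.one_mem_pow ih)

lemma F_subset_E (hE1 : E 1 = F (l 1))
    (hE : ∀ n ≥ 2, E n = E (n - 1) ^ (2 ^ n - 2) * F (l n) * E (n - 1) ^ (2 ^ n - 2))
    {n : ℕ} (hn : 1 ≤ n) : F (l n) ⊆ E n := by
  obtain rfl | hn := hn.eq_or_lt
  · exact hE1.ge
  have h1 := Set.one_mem_pow (n := 2 ^ n - 2) (one_mem_E hE1 hE (Nat.le_sub_one_of_lt hn))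
  rw [hE n hn]
  exact (Set.subset_mul_right _ h1).trans (Set.subset_mul_left _ h1)

lemma E_subset_F (hl : ∀ n ≥ 2, 4 * (2 ^ n * l (n - 1)) ≤ l n) (hE1 : E 1 = F (l 1))
    (hE : ∀ n ≥ 2, E n = E (n - 1) ^ (2 ^ n - 2) * F (l n) * E (n - 1) ^ (2 ^ n - 2))
    {n : ℕ} (hn : 1 ≤ n) : E n ⊆ F (2 * l n) := by
  induction n, hn using Nat.le_induction with
  | base => exact hE1 ▸ F_mono (by omega)
  | succ n hn ih =>
    set k := 2 ^ (n + 1) - 2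
    have hpow : E n ^ k ⊆ F (k * (2 * l n)) := (Set.pow_subset_pow_left ih).trans (F_pow_subset _ _)
    have hk : 4 * (k * l n) ≤ 4 * (2 ^ (n + 1) * l n) := by gcongr; exact Nat.sub_le _ _
    have hl' := hl (n + 1) (by omega)
    rw [Nat.add_sub_cancel] at hl'
    rw [hE (n + 1) (by omega), Nat.add_sub_cancel]
    refine (Set.mul_subset_mul (Set.mul_subset_mul hpow le_rfl) hpow).trans
      (((Set.mul_subset_mul_right (F_mul_F_subset _ _)).trans (F_mul_F_subset _ _)).trans
        (F_mono ?_))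
    linarith

end Sequence

end Lamp

/-- With `l 1 = 1`, `l n = 17 ^ (2^n · l (n-1))` for `n ≥ 2`, `E 1 = F (l 1)` and
`E n = (E (n-1))^(2^n - 2) · F (l n) · (E (n-1))^(2^n - 2)` for `n ≥ 2`, one has
`|E n \ F (l n)| / |F (l n)| → 0`, equivalently `|F (l n)| / |E n| → 1`. -/
theorem stmt17 (l : ℕ → ℕ) (E : ℕ → Set Lamp)
    (hl1 : l 1 = 1) (hl : ∀ n ≥ 2, l n = 17 ^ (2 ^ n * l (n - 1)))
    (hE1 : E 1 = Lamp.F (l 1))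
    (hE : ∀ n ≥ 2, E n = (E (n - 1)) ^ (2 ^ n - 2) * Lamp.F (l n) * (E (n - 1)) ^ (2 ^ n - 2)) :
    Tendsto (fun n => ((E n \ Lamp.F (l n)).ncard : ℝ) / ((Lamp.F (l n)).ncard : ℝ))
        atTop (𝓝 0) ∧
      Tendsto (fun n => ((Lamp.F (l n)).ncard : ℝ) / ((E n).ncard : ℝ)) atTop (𝓝 1) := by
  have hpos : ∀ n ≥ 1, 0 < l n := fun n hn => by
    obtain rfl | hn := hn.eq_or_lt
    · omega
    · rw [hl n hn]; positivity
  have hgrowth : ∀ n ≥ 2, 4 * (2 ^ n * l (n - 1)) ≤ l n := fun n hn =>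
    hl n hn ▸ four_mul_le_seventeen_pow _
  set t := fun n => 2 ^ n * l (n - 1)
  have hbound : ∀ n ≥ 2, ((E n \ Lamp.F (l n)).ncard : ℝ) / (Lamp.F (l n)).ncard ≤
      28800 * (t n : ℝ) ^ 5 * (16 / 17) ^ t n := fun n hn => by
    have hA := (Set.pow_subset_pow_left (n := 2 ^ n - 2) (Lamp.E_subset_F hgrowth hE1 hE
      (Nat.le_sub_one_of_lt hn))).trans (Lamp.F_pow_subset _ _)
    rw [hE n hn, hl n hn]
    exact Lamp.ncard_mul_F_mul_diff_div_le hA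
      ((Nat.mul_le_mul_right _ (Nat.sub_le _ _)).trans_eq (by ring))
      (Nat.mul_pos (Nat.two_pow_pos n) (hpos _ (by omega)))
  have htop : Tendsto t atTop atTop := tendsto_atTop_mono' atTop (eventually_atTop.2
    ⟨2, fun n hn => n.lt_two_pow_self.le.trans (Nat.le_mul_of_pos_right _ (hpos _ (by omega)))⟩)
    tendsto_id
  have hdecay : Tendsto (fun s : ℕ => 28800 * (s : ℝ) ^ 5 * (16 / 17) ^ s) atTop (𝓝 0) := by
    simpa [mul_assoc] using (tendsto_pow_const_mul_const_pow_of_abs_lt_one 5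
      (by norm_num : |(16 / 17 : ℝ)| < 1)).const_mul 28800
  have hdiff := squeeze_zero' (Eventually.of_forall fun n => by positivity)
    (eventually_atTop.2 ⟨2, hbound⟩) (hdecay.comp htop)
  refine ⟨hdiff, tendsto_ncard_div_ncard_of_tendsto_ncard_diff_div
    (eventually_atTop.2 ⟨1, fun n hn => ⟨Lamp.F_subset_E hE1 hE hn,
      (Lamp.finite_F _).subset (Lamp.E_subset_F hgrowth hE1 hE hn), 1, Lamp.one_mem_F _⟩⟩) hdiff⟩
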